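/- arXiv:1801.05856 — 3 statements merged into one kernel-verified Lean document; each statement's English description precedes it below -/
import Mathlib

section
/- (Theorem 1, SBM likelihood) Let M be the modified adjacency matrix of a graph G with M_{ij} = log(p/q) if {i,j} is an edge and M_{ij} = log((1-p)/(1-q)) otherwise (i ≠ j), and M_{ii} = 0. Under the stochastic block model SBM(n, r, p, q) with labels drawn uniformly and independently, for any two labelings X, Y ∈ Δ_r^n, the ratio of posterior probabilities satisfies ℙ[X | M] / ℙ[Y | M] = exp( ((r-1)/(2r)) ( Tr(X^T M X) - Tr(Y^T M Y) ) ), where X and Y are the n×d matrices of simplex vector-labels. Equivalently, ℙ[X | M] ∝ exp( ((r-1)/(2r)) Tr(X^T M X) ). -/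
/-! With `c = (r-1)/(2r)`, the simplex geometry gives `2c ⟨v a, v b⟩ = [a = b] - 1/r`, so
`c · Tr(XᵀMX)` is the total weight `∑_{i<j, σ i = σ j} M_ij` of same-label pairs, up to a term
independent of the labeling. On the other hand each edge factor of the likelihood is its value
under different labels times `exp M_ij` when the two labels agree, so the likelihood is a
labeling-independent constant times `exp` of the same weight. The uniform prior and the
normalization cancel in the posterior ratio. -/

open Matrix

/-- The probability of observing the graph with edge relation `G` under the SBM,
conditionally on the labeling `σ` (product over unordered pairs). -/
noncomputable def SBMlikelihood (n r : ℕ) (p q : ℝ) (G : Fin n → Fin n → Prop)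
    [DecidableRel G] (σ : Fin n → Fin r) : ℝ :=
  ∏ i : Fin n, ∏ j : Fin n,
    if i < j then
      (if G i j then (if σ i = σ j then p else q)
       else (if σ i = σ j then 1 - p else 1 - q))
    else 1

/-- The posterior probability of the labeling `σ` given the graph `G`, under the uniform
prior on labelings (the uniform prior cancels in the normalization). -/
noncomputable def SBMposterior (n r : ℕ) (p q : ℝ) (G : Fin n → Fin n → Prop)
    [DecidableRel G] (σ : Fin n → Fin r) : ℝ :=
  SBMlikelihood n r p q G σ / ∑ τ : Fin n → Fin r, SBMlikelihood n r p q G τ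

theorem sum_sum_eq_two_nsmul_sum_sum_lt {ι β : Type*} [Fintype ι] [LinearOrder ι]
    [AddCommMonoid β] (f : ι → ι → β) (hsymm : ∀ i j, f i j = f j i) (hdiag : ∀ i, f i i = 0) :
    ∑ i, ∑ j, f i j = 2 • ∑ i, ∑ j, if i < j then f i j else 0 := by
  have hsplit : ∀ i j, f i j = (if i < j then f i j else 0) + (if j < i then f j i else 0) := by
    intro i j
    rcases lt_trichotomy i j with h | rfl | h
    · simp [h, h.not_gt]
    · simp [hdiag]
    · simp [h, h.not_gt, hsymm i j]
  rw [Finset.sum_congr rfl fun i _ => Finset.sum_congr rfl fun j _ => hsplit i j]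
  simp only [Finset.sum_add_distrib]
  rw [Finset.sum_comm (f := fun i j => if j < i then f j i else 0), two_nsmul]

theorem trace_transpose_mul_mul_self {m n R : Type*} [Fintype m] [Fintype n] [CommSemiring R]
    (X : Matrix m n R) (M : Matrix m m R) :
    trace (Xᵀ * M * X) = ∑ i, ∑ j, M i j * (X i ⬝ᵥ X j) := by
  rw [trace_mul_cycle Xᵀ M X]
  simp only [trace, diag, mul_apply, dotProduct, transpose_apply, Finset.mul_sum, Finset.sum_mul]
  rw [Finset.sum_comm]
  exact Finset.sum_congr rfl fun i _ => Finset.sum_congr rfl fun j _ =>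
    Finset.sum_congr rfl fun k _ => by ring

theorem simplex_dotProduct_eq {r d : ℕ} (hr : 2 ≤ r) (v : Fin r → Fin d → ℝ)
    (hunit : ∀ a, v a ⬝ᵥ v a = 1) (hinner : ∀ a b, a ≠ b → v a ⬝ᵥ v b = -1 / ((r : ℝ) - 1))
    (a b : Fin r) :
    ((r : ℝ) - 1) / r * (v a ⬝ᵥ v b) = (if a = b then 1 else 0) - 1 / r := by
  have hr : (2 : ℝ) ≤ r := by exact_mod_cast hr
  have hr1 : (r : ℝ) - 1 ≠ 0 := by linarith
  by_cases hab : a = b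
  · rw [hab, hunit, if_pos rfl]
    field_simp
  · rw [hinner a b hab, if_neg hab]
    field_simp
    ring

section SBM

variable {n r : ℕ} {p q : ℝ} {G : Fin n → Fin n → Prop} [DecidableRel G]

noncomputable def sameLabelWeight (M : Matrix (Fin n) (Fin n) ℝ) (σ : Fin n → Fin r) : ℝ :=
  ∑ i, ∑ j, if i < j then (if σ i = σ j then M i j else 0) else 0

theorem edgeFactor_eq_mul_exp (hq : 0 < q) (hqp : q < p) (hp : p < 1) (e s : Prop)
    [Decidable e] [Decidable s] :
    (if e then (if s then p else q) else (if s then 1 - p else 1 - q))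
      = (if e then q else 1 - q) *
          Real.exp (if s then (if e then Real.log (p / q) else Real.log ((1 - p) / (1 - q)))
            else 0) := by
  have hq1 : 0 < 1 - q := by linarith
  have hp1 : 0 < 1 - p := by linarith
  split_ifs
  · rw [Real.exp_log (div_pos (hq.trans hqp) hq), mul_div_cancel₀ _ hq.ne']
  · rw [Real.exp_zero, mul_one]
  · rw [Real.exp_log (div_pos hp1 hq1), mul_div_cancel₀ _ hq1.ne']
  · rw [Real.exp_zero, mul_one]

theorem SBMlikelihood_eq_mul_exp (hq : 0 < q) (hqp : q < p) (hp : p < 1)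
    (M : Matrix (Fin n) (Fin n) ℝ)
    (hM : ∀ i j, M i j = if i = j then 0 else
      if G i j then Real.log (p / q) else Real.log ((1 - p) / (1 - q)))
    (σ : Fin n → Fin r) :
    SBMlikelihood n r p q G σ
      = (∏ i : Fin n, ∏ j : Fin n, if i < j then (if G i j then q else 1 - q) else 1) *
          Real.exp (sameLabelWeight M σ) := by
  simp only [SBMlikelihood, sameLabelWeight, Real.exp_sum, ← Finset.prod_mul_distrib]
  refine Finset.prod_congr rfl fun i _ => Finset.prod_congr rfl fun j _ => ?_
  by_cases hij : i < j
  · simp only [if_pos hij, hM i j, if_neg hij.ne]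
    exact edgeFactor_eq_mul_exp hq hqp hp _ _
  · simp [hij]

theorem SBMlikelihood_pos (hq : 0 < q) (hqp : q < p) (hp : p < 1) (σ : Fin n → Fin r) :
    0 < SBMlikelihood n r p q G σ :=
  Finset.prod_pos fun i _ => Finset.prod_pos fun j _ => by split_ifs <;> linarith

theorem SBMposterior_div_SBMposterior (hr : 1 ≤ r) (hq : 0 < q) (hqp : q < p) (hp : p < 1)
    (σ τ : Fin n → Fin r) :
    SBMposterior n r p q G σ / SBMposterior n r p q G τ
      = SBMlikelihood n r p q G σ / SBMlikelihood n r p q G τ := by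
  have : Nonempty (Fin r) := ⟨⟨0, hr⟩⟩
  have hZ : 0 < ∑ τ : Fin n → Fin r, SBMlikelihood n r p q G τ :=
    Finset.sum_pos (fun τ _ => SBMlikelihood_pos hq hqp hp τ) Finset.univ_nonempty
  exact div_div_div_cancel_right₀ hZ.ne' _ _

theorem mul_trace_eq_sameLabelWeight_sub {d : ℕ} (hr : 2 ≤ r) (v : Fin r → Fin d → ℝ)
    (hunit : ∀ a, v a ⬝ᵥ v a = 1) (hinner : ∀ a b, a ≠ b → v a ⬝ᵥ v b = -1 / ((r : ℝ) - 1))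
    (M : Matrix (Fin n) (Fin n) ℝ) (hMsymm : ∀ i j, M i j = M j i) (hMdiag : ∀ i, M i i = 0)
    (σ : Fin n → Fin r) (X : Matrix (Fin n) (Fin d) ℝ) (hX : ∀ i, X i = v (σ i)) :
    ((r : ℝ) - 1) / (2 * r) * trace (Xᵀ * M * X)
      = sameLabelWeight M σ - 1 / (2 * r) * ∑ i, ∑ j, M i j := by
  have hsame : ∑ i, ∑ j, (if σ i = σ j then M i j else 0) = 2 * sameLabelWeight M σ := by
    rw [sum_sum_eq_two_nsmul_sum_sum_lt _ (fun i j => by simp only [eq_comm, hMsymm i j])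
      (fun i => by simp [hMdiag]), two_nsmul, two_mul, sameLabelWeight]
  calc ((r : ℝ) - 1) / (2 * r) * trace (Xᵀ * M * X)
      = 1 / 2 * ∑ i, ∑ j, M i j * (((r : ℝ) - 1) / r * (v (σ i) ⬝ᵥ v (σ j))) := by
        simp only [trace_transpose_mul_mul_self, hX, Finset.mul_sum]
        exact Finset.sum_congr rfl fun i _ => Finset.sum_congr rfl fun j _ => by
          field_simp
    _ = 1 / 2 * ∑ i, ∑ j, ((if σ i = σ j then M i j else 0) - 1 / r * M i j) := by
        simp only [simplex_dotProduct_eq hr v hunit hinner]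
        exact congrArg _ <| Finset.sum_congr rfl fun i _ => Finset.sum_congr rfl fun j _ => by
          split_ifs <;> ring
    _ = sameLabelWeight M σ - 1 / (2 * r) * ∑ i, ∑ j, M i j := by
        simp only [Finset.sum_sub_distrib, hsame, ← Finset.mul_sum]
        ring

end SBM

theorem sbm_posterior_ratio_general (n r d : ℕ) (hr : 2 ≤ r) (p q : ℝ)
    (hq : 0 < q) (hqp : q < p) (hp : p < 1)
    (v : Fin r → Fin d → ℝ)
    (hunit : ∀ i, dotProduct (v i) (v i) = 1)
    (hinner : ∀ i j, i ≠ j → dotProduct (v i) (v j) = -1 / ((r : ℝ) - 1))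
    (G : Fin n → Fin n → Prop) [DecidableRel G]
    (hsymm : Symmetric G)
    (M : Matrix (Fin n) (Fin n) ℝ)
    (hM : ∀ i j, M i j = if i = j then 0 else
      if G i j then Real.log (p / q) else Real.log ((1 - p) / (1 - q)))
    (σX σY : Fin n → Fin r)
    (X Y : Matrix (Fin n) (Fin d) ℝ)
    (hX : ∀ i, X i = v (σX i)) (hY : ∀ i, Y i = v (σY i)) :
    SBMposterior n r p q G σX / SBMposterior n r p q G σY
      = Real.exp ((((r : ℝ) - 1) / (2 * r)) *
          (Matrix.trace (Xᵀ * M * X) - Matrix.trace (Yᵀ * M * Y))) := by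
  have hMsymm : ∀ i j, M i j = M j i := fun i j => by
    have hG : G i j ↔ G j i := ⟨@hsymm i j, @hsymm j i⟩
    simp only [hM, eq_comm (a := i), hG]
  have hMdiag : ∀ i, M i i = 0 := fun i => by simp [hM]
  have hL0 : (∏ i : Fin n, ∏ j : Fin n, if i < j then (if G i j then q else 1 - q) else 1) ≠ 0 :=
    Finset.prod_ne_zero_iff.2 fun i _ => Finset.prod_ne_zero_iff.2 fun j _ => by
      split_ifs <;> linarith
  rw [SBMposterior_div_SBMposterior (by omega) hq hqp hp,
    SBMlikelihood_eq_mul_exp hq hqp hp M hM, SBMlikelihood_eq_mul_exp hq hqp hp M hM,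
    mul_div_mul_left _ _ hL0, ← Real.exp_sub, mul_sub,
    mul_trace_eq_sameLabelWeight_sub hr v hunit hinner M hMsymm hMdiag σX X hX,
    mul_trace_eq_sameLabelWeight_sub hr v hunit hinner M hMsymm hMdiag σY Y hY, sub_sub_sub_cancel_right]

/-- Theorem 1 (SBM likelihood): the ratio of posterior probabilities of two labelings
X, Y given the modified adjacency matrix M equals exp(((r-1)/(2r))(Tr(XᵀMX) - Tr(YᵀMY))). -/
theorem sbm_posterior_ratio (n r d : ℕ) (hr : 2 ≤ r) (p q : ℝ)
    (hq : 0 < q) (hqp : q < p) (hp : p < 1)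
    (v : Fin r → Fin d → ℝ)
    (hunit : ∀ i, dotProduct (v i) (v i) = 1)
    (hinner : ∀ i j, i ≠ j → dotProduct (v i) (v j) = -1 / ((r : ℝ) - 1))
    (G : Fin n → Fin n → Prop) [DecidableRel G]
    (hsymm : Symmetric G) (hirr : Irreflexive G)
    (M : Matrix (Fin n) (Fin n) ℝ)
    (hM : ∀ i j, M i j = if i = j then 0 else
      if G i j then Real.log (p / q) else Real.log ((1 - p) / (1 - q)))
    (σX σY : Fin n → Fin r)
    (X Y : Matrix (Fin n) (Fin d) ℝ)
    (hX : ∀ i, X i = v (σX i)) (hY : ∀ i, Y i = v (σY i)) :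
    SBMposterior n r p q G σX / SBMposterior n r p q G σY
      = Real.exp ((((r : ℝ) - 1) / (2 * r)) *
          (Matrix.trace (Xᵀ * M * X) - Matrix.trace (Yᵀ * M * Y))) :=
  sbm_posterior_ratio_general n r d hr p q hq hqp hp v hunit hinner G hsymm M hM σX σY X Y hX hY
end

section
/- (Key algebraic identity behind Theorem 1) For any graph G on n nodes with edge set e and any labeling X ∈ Δ_r^n, with M the modified adjacency matrix (M_{ij} = log(p/q) on edges, log((1-p)/(1-q)) on non-edges, 0 on the diagonal, 0 < q < p < 1), the log-likelihood satisfies: e_in(X) log p + (P_in(X) - e_in(X)) log(1-p) + e_out(X) log q + (P_out(X) - e_out(X)) log(1-q) = ((r-1)/(2r)) Tr(X^T M X) + C(G, p, q, n), where P_in(X) = Σ_u C(g_u,2), P_out(X) = Σ_{u<v} g_u g_v, and C(G,p,q,n) is a constant depending only on G, p, q, n (not on X). -/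
open Matrix

/-- Number of monochromatic edges (unordered). -/
def eIn (n r : ℕ) (e : Fin n → Fin n → Prop) [DecidableRel e] (σ : Fin n → Fin r) : ℕ :=
  (Finset.univ.filter fun p : Fin n × Fin n => p.1 < p.2 ∧ e p.1 p.2 ∧ σ p.1 = σ p.2).card

/-- Number of bichromatic edges (unordered). -/
def eOut (n r : ℕ) (e : Fin n → Fin n → Prop) [DecidableRel e] (σ : Fin n → Fin r) : ℕ :=
  (Finset.univ.filter fun p : Fin n × Fin n => p.1 < p.2 ∧ e p.1 p.2 ∧ σ p.1 ≠ σ p.2).card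

/-- Number of monochromatic unordered node pairs: Σ_u C(g_u, 2). -/
def pIn (n r : ℕ) (σ : Fin n → Fin r) : ℕ :=
  ∑ u : Fin r, ((Finset.univ.filter fun i => σ i = u).card).choose 2

/-- Number of bichromatic unordered node pairs: Σ_{u<v} g_u g_v. -/
def pOut (n r : ℕ) (σ : Fin n → Fin r) : ℕ :=
  ∑ u : Fin r, ∑ w : Fin r,
    if u < w then
      (Finset.univ.filter fun i => σ i = u).card *
        (Finset.univ.filter fun i => σ i = w).card
    else 0

/-!
The rows of `X` are vertices of the regular simplex, so `Xᵢ ⬝ Xₖ = (r [σ i = σ k] - 1) / (r - 1)`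
and `((r - 1) / (2r)) Tr(XᵀMX) = ½ ∑_{σ i = σ k} M i k - (1 / 2r) ∑ M i k`, where the last sum does
not depend on the labeling. As `M` vanishes on the diagonal, the first sum runs over ordered
monochromatic pairs `i ≠ k`, and symmetry of the graph turns it into
`2 (e_in log (p / q) + (P_in - e_in) log ((1 - p) / (1 - q)))`. The log-likelihood equals the same
expression up to terms in `e_in + e_out` (the number of edges) and `P_in + P_out = C(n, 2)`, which
do not depend on the labeling either.
-/

open Finset

theorem Nat.two_mul_choose_two_eq (n : ℕ) : 2 * n.choose 2 = n * n - n := by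
  rw [Nat.choose_two_right, Nat.mul_div_cancel' n.even_mul_pred_self.two_dvd, Nat.mul_sub_one]

theorem card_filter_ne_eq_two_mul_card_filter_lt {α β : Type*} [Fintype α] [LinearOrder β]
    (f : α → β) (P : α → α → Prop) [DecidableRel P] (hP : ∀ ⦃a b⦄, P a b → P b a) :
    #{x : α × α | f x.1 ≠ f x.2 ∧ P x.1 x.2} = 2 * #{x : α × α | f x.1 < f x.2 ∧ P x.1 x.2} := by
  classical
  have hswap : #{x : α × α | f x.2 < f x.1 ∧ P x.1 x.2} =
      #{x : α × α | f x.1 < f x.2 ∧ P x.1 x.2} :=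
    card_equiv (Equiv.prodComm α α) fun x => by
      simpa using and_congr_right fun _ => ⟨fun h => hP h, fun h => hP h⟩
  rw [two_mul]
  nth_rw 2 [← hswap]
  rw [← card_union_of_disjoint (disjoint_filter.2 fun x _ h h' => lt_asymm h.1 h'.1)]
  congr 1
  ext x
  simp only [mem_union, mem_filter, mem_univ, true_and, ne_iff_lt_or_gt, or_and_right]

section Counts

variable {n r : ℕ}

theorem two_mul_eIn (e : Fin n → Fin n → Prop) [DecidableRel e] (he : ∀ ⦃i j⦄, e i j → e j i)
    (σ : Fin n → Fin r) :
    2 * eIn n r e σ = #{x : Fin n × Fin n | x.1 ≠ x.2 ∧ e x.1 x.2 ∧ σ x.1 = σ x.2} :=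
  (card_filter_ne_eq_two_mul_card_filter_lt id (fun a b => e a b ∧ σ a = σ b)
    fun _ _ h => ⟨he h.1, h.2.symm⟩).symm

theorem eIn_add_eOut (e : Fin n → Fin n → Prop) [DecidableRel e] (σ : Fin n → Fin r) :
    eIn n r e σ + eOut n r e σ = #{x : Fin n × Fin n | x.1 < x.2 ∧ e x.1 x.2} := by
  rw [← card_filter_add_card_filter_not (fun x : Fin n × Fin n => σ x.1 = σ x.2),
    filter_filter, filter_filter, eIn, eOut]
  simp only [and_assoc, ne_eq]

theorem two_mul_pIn (σ : Fin n → Fin r) :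
    2 * pIn n r σ = #{x : Fin n × Fin n | x.1 ≠ x.2 ∧ σ x.1 = σ x.2} := by
  rw [card_eq_sum_card_fiberwise (f := fun x => σ x.1) (t := univ) fun _ _ => mem_univ _, pIn,
    mul_sum]
  refine sum_congr rfl fun u _ => ?_
  have hfiber : ({x ∈ {x : Fin n × Fin n | x.1 ≠ x.2 ∧ σ x.1 = σ x.2} | σ x.1 = u} : Finset _) =
      ({i | σ i = u} : Finset (Fin n)).offDiag := by
    ext x
    simp only [mem_filter, mem_univ, true_and, mem_offDiag]
    grind
  rw [hfiber, offDiag_card, Nat.two_mul_choose_two_eq]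

theorem pOut_eq_card_filter_lt (σ : Fin n → Fin r) :
    pOut n r σ = #{x : Fin n × Fin n | σ x.1 < σ x.2} := by
  rw [card_eq_sum_card_fiberwise (f := fun x => (σ x.1, σ x.2)) (t := univ)
    fun _ _ => mem_univ _, ← univ_product_univ, sum_product, pOut]
  refine sum_congr rfl fun u _ => sum_congr rfl fun w _ => ?_
  split_ifs with huw
  · rw [← card_product]
    congr 1
    ext x
    simp only [mem_filter, mem_univ, true_and, mem_product, Prod.mk.injEq]
    grind
  · refine (card_eq_zero.2 (filter_eq_empty_iff.2 fun x hx hxuw => huw ?_)).symm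
    obtain ⟨rfl, rfl⟩ := Prod.mk.inj hxuw
    exact (mem_filter.1 hx).2

theorem pIn_add_pOut (σ : Fin n → Fin r) : pIn n r σ + pOut n r σ = n.choose 2 := by
  have hsplit := card_filter_add_card_filter_not (s := (univ : Finset (Fin n)).offDiag)
    (fun x : Fin n × Fin n => σ x.1 = σ x.2)
  have hIn : {x ∈ (univ : Finset (Fin n)).offDiag | σ x.1 = σ x.2} =
      ({x | x.1 ≠ x.2 ∧ σ x.1 = σ x.2} : Finset (Fin n × Fin n)) := by
    ext x
    simp
  have hOut : {x ∈ (univ : Finset (Fin n)).offDiag | ¬σ x.1 = σ x.2} =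
      ({x | σ x.1 ≠ σ x.2 ∧ True} : Finset (Fin n × Fin n)) := by
    ext x
    simp only [mem_filter, mem_offDiag, mem_univ, true_and, and_true]
    exact and_iff_right_of_imp fun h hx => h (congrArg σ hx)
  rw [hIn, hOut, card_filter_ne_eq_two_mul_card_filter_lt σ (fun _ _ => True) fun _ _ h => h,
    offDiag_card, card_univ, Fintype.card_fin, ← Nat.two_mul_choose_two_eq, ← two_mul_pIn] at hsplit
  simp only [and_true, ← pOut_eq_card_filter_lt] at hsplit
  omega

end Counts

theorem Matrix.trace_transpose_mul_mul_eq_sum {ι κ R : Type*} [Fintype ι] [Fintype κ]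
    [CommSemiring R] (M : Matrix ι ι R) (X : Matrix ι κ R) :
    trace (Xᵀ * M * X) = ∑ x : ι × ι, M x.1 x.2 * (X x.1 ⬝ᵥ X x.2) := by
  simp only [trace, Matrix.diag, mul_apply, transpose_apply, dotProduct, Fintype.sum_prod_type,
    sum_mul, mul_sum]
  rw [sum_comm]
  refine (sum_congr rfl fun j _ => sum_comm).trans (sum_comm.trans ?_)
  exact sum_congr rfl fun i _ => sum_congr rfl fun j _ => sum_congr rfl fun k _ => by ring

theorem trace_transpose_mul_mul_of_simplex_rows {ι κ : Type*} [Fintype ι] [Fintype κ] {r : ℕ}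
    (hr : 2 ≤ r) (v : Fin r → κ → ℝ) (hunit : ∀ a, v a ⬝ᵥ v a = 1)
    (hinner : ∀ a b, a ≠ b → v a ⬝ᵥ v b = -1 / ((r : ℝ) - 1)) (M : Matrix ι ι ℝ)
    (σ : ι → Fin r) (X : Matrix ι κ ℝ) (hX : ∀ i, X i = v (σ i)) :
    ((r : ℝ) - 1) / (2 * r) * trace (Xᵀ * M * X) =
      (∑ x : ι × ι, if σ x.1 = σ x.2 then M x.1 x.2 else 0) / 2
        - (∑ x : ι × ι, M x.1 x.2) / (2 * r) := by
  have hr1 : (r : ℝ) - 1 ≠ 0 := by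
    have : (2 : ℝ) ≤ r := by exact_mod_cast hr
    linarith
  have hr0 : (r : ℝ) ≠ 0 := by positivity
  rw [Matrix.trace_transpose_mul_mul_eq_sum, mul_sum, sum_div, sum_div, ← sum_sub_distrib]
  refine sum_congr rfl fun x _ => ?_
  rw [hX, hX]
  split_ifs with h
  · rw [h, hunit]
    field_simp
  · rw [hinner _ _ h]
    field_simp
    ring

theorem sum_ite_eq_eIn_pIn {n r : ℕ} (e : Fin n → Fin n → Prop) [DecidableRel e]
    (he : ∀ ⦃i j⦄, e i j → e j i) (a b : ℝ) (M : Matrix (Fin n) (Fin n) ℝ)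
    (hM : ∀ i j, M i j = if i = j then 0 else if e i j then a else b) (σ : Fin n → Fin r) :
    ∑ x : Fin n × Fin n, (if σ x.1 = σ x.2 then M x.1 x.2 else 0) =
      2 * (a * eIn n r e σ + b * ((pIn n r σ : ℝ) - eIn n r e σ)) := by
  have hpoint : ∀ x : Fin n × Fin n, (if σ x.1 = σ x.2 then M x.1 x.2 else 0) =
      b * (if x.1 ≠ x.2 ∧ σ x.1 = σ x.2 then 1 else 0)
        + (a - b) * (if x.1 ≠ x.2 ∧ e x.1 x.2 ∧ σ x.1 = σ x.2 then 1 else 0) := by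
    intro x
    rw [hM]
    split_ifs <;> simp_all
  simp only [hpoint, sum_add_distrib, ← mul_sum, sum_boole]
  rw [← two_mul_pIn, ← two_mul_eIn e he]
  push_cast
  ring

theorem log_likelihood_diff_eq_trace_diff_general (n r d : ℕ) (hr : 2 ≤ r) (p q : ℝ)
    (hq : 0 < q) (hqp : q < p) (hp : p < 1)
    (v : Fin r → Fin d → ℝ)
    (hunit : ∀ i, dotProduct (v i) (v i) = 1)
    (hinner : ∀ i j, i ≠ j → dotProduct (v i) (v j) = -1 / ((r : ℝ) - 1))
    (e : Fin n → Fin n → Prop) [DecidableRel e]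
    (hsymm : Symmetric e)
    (M : Matrix (Fin n) (Fin n) ℝ)
    (hM : ∀ i j, M i j = if i = j then 0 else
      if e i j then Real.log (p / q) else Real.log ((1 - p) / (1 - q)))
    (L : (Fin n → Fin r) → ℝ)
    (hL : ∀ σ, L σ =
      (eIn n r e σ : ℝ) * Real.log p
        + ((pIn n r σ : ℝ) - (eIn n r e σ : ℝ)) * Real.log (1 - p)
        + (eOut n r e σ : ℝ) * Real.log q
        + ((pOut n r σ : ℝ) - (eOut n r e σ : ℝ)) * Real.log (1 - q))
    (σX σY : Fin n → Fin r)
    (X Y : Matrix (Fin n) (Fin d) ℝ)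
    (hX : ∀ i, X i = v (σX i)) (hY : ∀ i, Y i = v (σY i)) :
    L σX - L σY = (((r : ℝ) - 1) / (2 * r)) *
      (Matrix.trace (Xᵀ * M * X) - Matrix.trace (Yᵀ * M * Y)) := by
  have hEdges :
      ((eIn n r e σX + eOut n r e σX : ℕ) : ℝ) = (eIn n r e σY + eOut n r e σY : ℕ) := by
    rw [eIn_add_eOut, eIn_add_eOut]
  have hPairs : ((pIn n r σX + pOut n r σX : ℕ) : ℝ) = (pIn n r σY + pOut n r σY : ℕ) := by
    rw [pIn_add_pOut, pIn_add_pOut]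
  push_cast at hEdges hPairs
  have hp0 : 0 < p := hq.trans hqp
  rw [hL, hL, mul_sub,
    trace_transpose_mul_mul_of_simplex_rows hr v hunit hinner M σX X hX,
    trace_transpose_mul_mul_of_simplex_rows hr v hunit hinner M σY Y hY,
    sum_ite_eq_eIn_pIn e hsymm _ _ M hM, sum_ite_eq_eIn_pIn e hsymm _ _ M hM,
    Real.log_div hp0.ne' hq.ne', Real.log_div (by linarith) (by linarith)]
  linear_combination (Real.log q - Real.log (1 - q)) * hEdges + Real.log (1 - q) * hPairs

/-- Key algebraic identity behind Theorem 1: the difference of the log-likelihoods of two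
labelings equals ((r-1)/(2r)) times the difference of the traces Tr(XᵀMX). -/
theorem log_likelihood_diff_eq_trace_diff (n r d : ℕ) (hr : 2 ≤ r) (p q : ℝ)
    (hq : 0 < q) (hqp : q < p) (hp : p < 1)
    (v : Fin r → Fin d → ℝ)
    (hunit : ∀ i, dotProduct (v i) (v i) = 1)
    (hinner : ∀ i j, i ≠ j → dotProduct (v i) (v j) = -1 / ((r : ℝ) - 1))
    (e : Fin n → Fin n → Prop) [DecidableRel e]
    (hsymm : Symmetric e) (hirr : Irreflexive e)
    (M : Matrix (Fin n) (Fin n) ℝ)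
    (hM : ∀ i j, M i j = if i = j then 0 else
      if e i j then Real.log (p / q) else Real.log ((1 - p) / (1 - q)))
    (L : (Fin n → Fin r) → ℝ)
    (hL : ∀ σ, L σ =
      (eIn n r e σ : ℝ) * Real.log p
        + ((pIn n r σ : ℝ) - (eIn n r e σ : ℝ)) * Real.log (1 - p)
        + (eOut n r e σ : ℝ) * Real.log q
        + ((pOut n r σ : ℝ) - (eOut n r e σ : ℝ)) * Real.log (1 - q))
    (σX σY : Fin n → Fin r)
    (X Y : Matrix (Fin n) (Fin d) ℝ)
    (hX : ∀ i, X i = v (σX i)) (hY : ∀ i, Y i = v (σY i)) :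
    L σX - L σY = (((r : ℝ) - 1) / (2 * r)) *
      (Matrix.trace (Xᵀ * M * X) - Matrix.trace (Yᵀ * M * Y)) :=
  log_likelihood_diff_eq_trace_diff_general n r d hr p q hq hqp hp v hunit hinner e hsymm M hM L hL
    σX σY X Y hX hY
end

section
/- (Theorem 3, single-node conditional distribution) Under SBM(n,r,p,q), fix the modified adjacency matrix M, supervised labels X_L, and the labels X_{U¬i} of all remaining unsupervised nodes except node i. Then for any X_i ∈ Δ_r, ℙ[X_i | M, X_L, X_{U¬i}] = exp( ((r-1)/r) M_i [X_{U¬i}; X_L] X_i^T ) / Σ_{X_j ∈ Δ_r} exp( ((r-1)/r) M_i [X_{U¬i}; X_L] X_j^T ), where M_i is the i-th row of M with the (i,i) entry removed. -/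
open Matrix

/-!
Only the edges at node `i` depend on its label. The factor of the edge `{i, j}` is `q` or `1 - q`
(according to whether the edge is present) times `exp (M i j)` if `j` carries the label `b` of `i`
and times `1` otherwise, so the likelihood of giving `i` the label `b` is
`C * exp (∑ j ≠ i, M i j * [σ j = b])` with `C` independent of `b`. For the vertices of the
regular simplex, `((r - 1) / r) * ⟨v s, v b⟩ = [s = b] - 1 / r`, so the exponent on the right-hand
side differs from this one by a constant independent of `b` as well, and both constants cancel
in the normalized ratio.
-/

open Finset

theorem div_sum_eq_of_forall_eq_const_mul {ι G₀ : Type*} [Fintype ι] [Field G₀]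
    {f g : ι → G₀} {c : G₀} (hc : c ≠ 0) (h : ∀ b, f b = c * g b) (a : ι) :
    f a / ∑ b, f b = g a / ∑ b, g b := by
  simp only [h, ← mul_sum]
  exact mul_div_mul_left _ _ hc

theorem prod_prod_lt_eq_mul_prod_compl {ι M : Type*} [Fintype ι] [LinearOrder ι]
    [CommMonoid M] (f : ι → ι → M) (hf : ∀ k j, f k j = f j k) (i : ι) :
    ∏ k, ∏ j, (if k < j then f k j else 1) =
      (∏ j ∈ {i}ᶜ, f i j) * ∏ k ∈ {i}ᶜ, ∏ j ∈ {i}ᶜ, (if k < j then f k j else 1) := by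
  set g : ι → ι → M := fun k j => if k < j then f k j else 1
  have hpair : ∀ j ∈ ({i}ᶜ : Finset ι), g i j * g j i = f i j := by
    intro j hj
    have hji : i ≠ j := fun h => by simp [h] at hj
    rcases hji.lt_or_gt with h | h
    · simp [g, h, h.not_gt]
    · simp [g, h, h.not_gt, hf j i]
  calc ∏ k, ∏ j, g k j
      = (∏ j ∈ {i}ᶜ, g i j) * ∏ k ∈ {i}ᶜ, (g k i * ∏ j ∈ {i}ᶜ, g k j) := by
        simp only [Fintype.prod_eq_mul_prod_compl i, g, lt_irrefl, if_false, one_mul]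
    _ = (∏ j ∈ {i}ᶜ, g i j * g j i) * ∏ k ∈ {i}ᶜ, ∏ j ∈ {i}ᶜ, g k j := by
        rw [prod_mul_distrib, prod_mul_distrib, mul_assoc]
    _ = _ := by rw [prod_congr rfl hpair]

theorem simplex_scaled_dotProduct {r d : ℕ} {v : Fin r → Fin d → ℝ}
    (hunit : ∀ i, v i ⬝ᵥ v i = 1) (hinner : ∀ i j, i ≠ j → v i ⬝ᵥ v j = -1 / ((r : ℝ) - 1))
    (s b : Fin r) :
    ((r : ℝ) - 1) / r * v s ⬝ᵥ v b = (if s = b then 1 else 0) - 1 / r := by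
  have hr : (r : ℝ) ≠ 0 := Nat.cast_ne_zero.mpr s.pos.ne'
  split_ifs with hsb
  · rw [hsb, hunit]
    field_simp
  · have hr1 : (r : ℝ) - 1 ≠ 0 := by
      have : (s : ℕ) ≠ b := Fin.val_ne_of_ne hsb
      have : 2 ≤ r := by omega
      have : (2 : ℝ) ≤ r := by exact_mod_cast this
      linarith
    rw [hinner s b hsb]
    field_simp
    ring

section SBM

variable {p q : ℝ}

def sbmEdgeFactor (p q : ℝ) (adj same : Prop) [Decidable adj] [Decidable same] : ℝ :=
  if adj then (if same then p else q) else (if same then 1 - p else 1 - q)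

/-- The off-diagonal entries of the modified adjacency matrix `M`. -/
noncomputable def sbmLogOdds (p q : ℝ) (adj : Prop) [Decidable adj] : ℝ :=
  if adj then Real.log (p / q) else Real.log ((1 - p) / (1 - q))

theorem sbmEdgeFactor_eq_mul_exp (hq : 0 < q) (hqp : q < p) (hp : p < 1)
    (adj same : Prop) [Decidable adj] [Decidable same] :
    sbmEdgeFactor p q adj same =
      (if adj then q else 1 - q) * Real.exp (sbmLogOdds p q adj * if same then 1 else 0) := by
  have hq1 : 0 < 1 - q := by linarith
  have hp0 : 0 < p := hq.trans hqp
  have hp1 : 0 < 1 - p := by linarith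
  unfold sbmEdgeFactor sbmLogOdds
  split_ifs <;> simp [Real.exp_log, *, mul_div_cancel₀, hq.ne', hq1.ne']

theorem sbmEdgeFactor_ne_zero (hq : 0 < q) (hqp : q < p) (hp : p < 1)
    (adj same : Prop) [Decidable adj] [Decidable same] : sbmEdgeFactor p q adj same ≠ 0 := by
  rw [sbmEdgeFactor_eq_mul_exp hq hqp hp]
  refine mul_ne_zero ?_ (Real.exp_ne_zero _)
  split_ifs <;> linarith

theorem SBMlikelihood_update_eq_mul_exp {n r : ℕ} (hq : 0 < q) (hqp : q < p) (hp : p < 1)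
    {G : Fin n → Fin n → Prop} [DecidableRel G] (hsymm : ∀ k j, G k j → G j k)
    {M : Matrix (Fin n) (Fin n) ℝ} (hM : ∀ k j, k ≠ j → M k j = sbmLogOdds p q (G k j))
    (σ : Fin n → Fin r) (i : Fin n) :
    ∃ C ≠ 0, ∀ b, SBMlikelihood n r p q G (Function.update σ i b) =
      C * Real.exp (∑ j ∈ {i}ᶜ, M i j * if σ j = b then 1 else 0) := by
  set C := (∏ j ∈ ({i}ᶜ : Finset (Fin n)), if G i j then q else 1 - q) *
    ∏ k ∈ {i}ᶜ, ∏ j ∈ {i}ᶜ, if k < j then sbmEdgeFactor p q (G k j) (σ k = σ j) else 1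
  refine ⟨C, ?_, fun b => ?_⟩
  · refine mul_ne_zero (prod_ne_zero_iff.mpr fun j _ => ?_)
      (prod_ne_zero_iff.mpr fun k _ => prod_ne_zero_iff.mpr fun j _ => ?_)
    · split_ifs <;> linarith
    · split_ifs
      exacts [sbmEdgeFactor_ne_zero hq hqp hp _ _, one_ne_zero]
  set σ' := Function.update σ i b
  have hσ' : ∀ j ∈ ({i}ᶜ : Finset (Fin n)), σ' j = σ j := fun j hj =>
    Function.update_of_ne (by simpa using hj) _ _
  have hσ'i : σ' i = b := Function.update_self _ _ _
  calc SBMlikelihood n r p q G σ'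
      = (∏ j ∈ {i}ᶜ, sbmEdgeFactor p q (G i j) (σ' i = σ' j)) *
          ∏ k ∈ {i}ᶜ, ∏ j ∈ {i}ᶜ,
            if k < j then sbmEdgeFactor p q (G k j) (σ' k = σ' j) else 1 :=
        prod_prod_lt_eq_mul_prod_compl (fun k j => sbmEdgeFactor p q (G k j) (σ' k = σ' j))
          (fun k j => by simp only [sbmEdgeFactor, eq_comm (a := σ' k),
            (⟨hsymm k j, hsymm j k⟩ : G k j ↔ G j k)]) i
    _ = (∏ j ∈ {i}ᶜ, (if G i j then q else 1 - q) *
            Real.exp (M i j * if σ j = b then 1 else 0)) *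
          ∏ k ∈ {i}ᶜ, ∏ j ∈ {i}ᶜ,
            if k < j then sbmEdgeFactor p q (G k j) (σ k = σ j) else 1 := by
        congr 1
        · refine prod_congr rfl fun j hj => ?_
          rw [sbmEdgeFactor_eq_mul_exp hq hqp hp, hM i j (by simpa [eq_comm] using hj),
            hσ' j hj, hσ'i]
          simp only [eq_comm (a := b)]
        · exact prod_congr rfl fun k hk => prod_congr rfl fun j hj => by rw [hσ' k hk, hσ' j hj]
    _ = C * Real.exp (∑ j ∈ {i}ᶜ, M i j * if σ j = b then 1 else 0) := by
        rw [prod_mul_distrib, ← Real.exp_sum]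
        ring

end SBM

theorem single_node_conditional_general (n r d : ℕ) (p q : ℝ)
    (hq : 0 < q) (hqp : q < p) (hp : p < 1)
    (v : Fin r → Fin d → ℝ)
    (hunit : ∀ i, dotProduct (v i) (v i) = 1)
    (hinner : ∀ i j, i ≠ j → dotProduct (v i) (v j) = -1 / ((r : ℝ) - 1))
    (G : Fin n → Fin n → Prop) [DecidableRel G]
    (hsymm : Symmetric G)
    (M : Matrix (Fin n) (Fin n) ℝ)
    (hM : ∀ i j, M i j = if i = j then 0 else
      if G i j then Real.log (p / q) else Real.log ((1 - p) / (1 - q)))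
    (σ : Fin n → Fin r) (i : Fin n) (a : Fin r) :
    SBMlikelihood n r p q G (Function.update σ i a) /
        (∑ b : Fin r, SBMlikelihood n r p q G (Function.update σ i b))
      = Real.exp ((((r : ℝ) - 1) / r) *
            ∑ j : Fin n, (if j = i then 0 else
              M i j * dotProduct (v (σ j)) (v a))) /
          ∑ b : Fin r, Real.exp ((((r : ℝ) - 1) / r) *
            ∑ j : Fin n, (if j = i then 0 else
              M i j * dotProduct (v (σ j)) (v b))) := by
  obtain ⟨C, hC, hlik⟩ := SBMlikelihood_update_eq_mul_exp hq hqp hp hsymm (M := M)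
    (fun k j hkj => by rw [hM, if_neg hkj]; rfl) σ i
  have hexp : ∀ b, Real.exp ((((r : ℝ) - 1) / r) *
      ∑ j : Fin n, (if j = i then 0 else M i j * v (σ j) ⬝ᵥ v b)) =
      Real.exp (-∑ j ∈ {i}ᶜ, M i j / r) *
        Real.exp (∑ j ∈ {i}ᶜ, M i j * if σ j = b then 1 else 0) := by
    intro b
    rw [← Real.exp_add, Fintype.sum_eq_add_sum_compl i, if_pos rfl, zero_add, mul_sum,
      ← sum_neg_distrib, ← sum_add_distrib]
    refine congrArg Real.exp (sum_congr rfl fun j hj => ?_)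
    rw [if_neg (by simpa using hj), mul_left_comm, simplex_scaled_dotProduct hunit hinner]
    ring
  rw [div_sum_eq_of_forall_eq_const_mul hC hlik a]
  exact (div_sum_eq_of_forall_eq_const_mul (Real.exp_ne_zero _) hexp a).symm

/-- Theorem 3 (single-node conditional distribution): the conditional probability that
node i receives label a, given the graph and all other node labels, equals
exp(((r-1)/r) Σ_{j≠i} M_{ij}⟨X_j, v_a⟩) / Σ_b exp(((r-1)/r) Σ_{j≠i} M_{ij}⟨X_j, v_b⟩). -/
theorem single_node_conditional (n r d : ℕ) (hr : 2 ≤ r) (p q : ℝ)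
    (hq : 0 < q) (hqp : q < p) (hp : p < 1)
    (v : Fin r → Fin d → ℝ)
    (hunit : ∀ i, dotProduct (v i) (v i) = 1)
    (hinner : ∀ i j, i ≠ j → dotProduct (v i) (v j) = -1 / ((r : ℝ) - 1))
    (G : Fin n → Fin n → Prop) [DecidableRel G]
    (hsymm : Symmetric G) (hirr : Irreflexive G)
    (M : Matrix (Fin n) (Fin n) ℝ)
    (hM : ∀ i j, M i j = if i = j then 0 else
      if G i j then Real.log (p / q) else Real.log ((1 - p) / (1 - q)))
    (σ : Fin n → Fin r) (i : Fin n) (a : Fin r) :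
    SBMlikelihood n r p q G (Function.update σ i a) /
        (∑ b : Fin r, SBMlikelihood n r p q G (Function.update σ i b))
      = Real.exp ((((r : ℝ) - 1) / r) *
            ∑ j : Fin n, (if j = i then 0 else
              M i j * dotProduct (v (σ j)) (v a))) /
          ∑ b : Fin r, Real.exp ((((r : ℝ) - 1) / r) *
            ∑ j : Fin n, (if j = i then 0 else
              M i j * dotProduct (v (σ j)) (v b))) :=
  single_node_conditional_general n r d p q hq hqp hp v hunit hinner G hsymm M hM σ i a
end
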